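/- For every ξ ∈ ℝ²∖{0}, the 3×3 real symmetric matrix s(ξ) := (1/(2μ|ξ|))·(m·D(ξ) − I₃) is negative definite. (The principal symbol of the elastic single layer potential operator is negative definite, so the single layer operator is elliptic of order −1 and sign-definite.) -/

import Mathlib

/-- The block-diagonal matrix `D(ξ) = diag(Λ(ξ), 1)`, `Λ(ξ)_{ij} = ξ_i ξ_j / |ξ|²`. -/
noncomputable def dMat (ξ : Fin 2 → ℝ) : Matrix (Fin 3) (Fin 3) ℝ :=
  Matrix.of fun p q =>
    (![ξ 0, ξ 1, 0] p * ![ξ 0, ξ 1, 0] q) / (ξ 0 ^ 2 + ξ 1 ^ 2) +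
      (if p = 2 ∧ q = 2 then 1 else 0)

/-!
`D(ξ)` is the orthogonal projection onto the span of `(ξ, 0)` and `e₃`, and `m < 1` because
`λ + 2μ > 0` and `μ > 0`. For a projection `P`, `I - m P` is positive definite whenever `m < 1`:
it is `I + (-m) P` if `m ≤ 0` and `(1 - m) I + m (I - P)` if `m > 0`. Multiplying by
`1 / (2μ|ξ|) > 0` gives `-s(ξ)` positive definite.
-/

open scoped ComplexOrder MatrixOrder

namespace Matrix

variable {n 𝕜 : Type*} [Fintype n] [DecidableEq n] [RCLike 𝕜]

theorem posDef_one_sub_smul_of_isStarProjection {P : Matrix n n 𝕜} (hP : IsStarProjection P)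
    {m : ℝ} (hm : m < 1) : (1 - m • P).PosDef := by
  rcases le_or_gt m 0 with hm0 | hm0
  · rw [sub_eq_add_neg, ← neg_smul]
    exact PosDef.one.add_posSemidef
      ((nonneg_iff_posSemidef.mp hP.nonneg).smul (neg_nonneg.mpr hm0))
  · have hsplit : 1 - m • P = (1 - m) • (1 : Matrix n n 𝕜) + m • (1 - P) := by module
    rw [hsplit]
    exact (PosDef.one.smul (sub_pos.mpr hm)).add_posSemidef
      ((nonneg_iff_posSemidef.mp hP.one_sub.nonneg).smul hm0.le)

end Matrix

lemma sq_add_sq_pos_of_ne_zero {ξ : Fin 2 → ℝ} (hξ : ξ ≠ 0) : 0 < ξ 0 ^ 2 + ξ 1 ^ 2 := by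
  obtain ⟨i, hi⟩ := Function.ne_iff.mp hξ
  fin_cases i <;> simp only [Pi.zero_apply] at hi <;> positivity

lemma isStarProjection_dMat {ξ : Fin 2 → ℝ} (hξ : ξ ≠ 0) : IsStarProjection (dMat ξ) := by
  have hr := (sq_add_sq_pos_of_ne_zero hξ).ne'
  refine ⟨?_, ?_⟩
  · ext i j
    fin_cases i <;> fin_cases j <;>
      simp [dMat, Matrix.mul_apply, Fin.sum_univ_three] <;> field_simp
  · ext i j
    fin_cases i <;> fin_cases j <;> simp [dMat, mul_comm]

/-- The principal symbol `s(ξ) = (1/(2μ|ξ|))(m·D(ξ) − I₃)`, `m = (λ+μ)/(2(λ+2μ))`, of the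
elastic single layer potential is negative definite for every `ξ ≠ 0`. -/
theorem single_layer_symbol_negDef
    (lam mu : ℝ) (hmu : 0 < mu) (hlam2mu : 0 < lam + 2 * mu)
    (ξ : Fin 2 → ℝ) (hξ : ξ ≠ 0) :
    (-((1 / (2 * mu * Real.sqrt (ξ 0 ^ 2 + ξ 1 ^ 2))) •
        (((lam + mu) / (2 * (lam + 2 * mu))) • dMat ξ - 1))).PosDef := by
  have hm : (lam + mu) / (2 * (lam + 2 * mu)) < 1 := by
    rw [div_lt_one (by positivity)]
    linarith
  have hc : 0 < 1 / (2 * mu * Real.sqrt (ξ 0 ^ 2 + ξ 1 ^ 2)) :=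
    one_div_pos.mpr (mul_pos (by positivity) (Real.sqrt_pos.mpr (sq_add_sq_pos_of_ne_zero hξ)))
  rw [← smul_neg, neg_sub]
  exact (Matrix.posDef_one_sub_smul_of_isStarProjection (isStarProjection_dMat hξ) hm).smul hc
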